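/- arXiv:1905.07769 — 2 statements merged into one kernel-verified Lean document; each statement's English description precedes it below -/
import Mathlib

section
/- Let Φ, ν, ℓ, φ, φ̂ and F be as in the context. Then F is of class C^1: the function G(m,x) := −∫ Φ'( y − ∫_{ℝ^d} φ̂(x',z) m(dx') ) φ̂(x,z) ν(dz,dy) is bounded, jointly continuous on P(ℝ^d) × ℝ^d, and satisfies F(m') − F(m) = ∫₀¹ ∫_{ℝ^d} G((1−λ)m + λm', x) (m' − m)(dx) dλ for all probability measures m, m'. Moreover, for each m, G(m,·) is continuously differentiable in x with ∇_x G(m,x) = −∫ Φ'( y − ∫_{ℝ^d} φ̂(x',z) m(dx') ) ∇_x φ̂(x,z) ν(dz,dy), where ∇_x φ̂(x,z) = (ℓ'(β)φ(α·z), ℓ(β)φ'(α·z) z) for x = (β,α). -/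
open MeasureTheory Real Filter Topology
open scoped ENNReal NNReal RealInnerProductSpace

noncomputable section

/-- Euclidean space `ℝ^d`. -/
abbrev Rd (d : ℕ) : Type := EuclideanSpace ℝ (Fin d)

/-- Borel probability measures. -/
abbrev PM (α : Type*) [MeasurableSpace α] := MeasureTheory.ProbabilityMeasure α

/-- Finite second moment, i.e. membership in `P₂`. -/
def P2 {α : Type*} [MeasurableSpace α] [NormedAddCommGroup α] (μ : PM α) : Prop :=
  Integrable (fun x => ‖x‖ ^ 2) (μ : Measure α)

/-- The convex combination `(1-λ)·μ + λ·ν` of probability measures (with `λ` clamped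
to `[0,1]`, which is the only range in which it is ever used). -/
def convComb {α : Type*} [MeasurableSpace α] (lam : ℝ) (μ ν : PM α) : PM α :=
  ⟨(ENNReal.ofReal (1 - max 0 (min lam 1))) • (μ : Measure α)
      + (ENNReal.ofReal (max 0 (min lam 1))) • (ν : Measure α), by
    have ht0 : 0 ≤ max 0 (min lam 1) := le_max_left _ _
    have ht1 : max 0 (min lam 1) ≤ 1 := max_le zero_le_one (min_le_right _ _)
    constructor
    simp only [Measure.coe_add, Measure.coe_smul, Pi.add_apply, Pi.smul_apply,
      measure_univ, smul_eq_mul, mul_one]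
    rw [← ENNReal.ofReal_add (by linarith) ht0]
    norm_num⟩

/-- `F` is of class `C¹` on the space of probability measures, with linear functional
derivative `DF`. -/
structure IsC1 {α : Type*} [MeasurableSpace α] [TopologicalSpace α] [OpensMeasurableSpace α]
    (F : PM α → ℝ) (DF : PM α → α → ℝ) : Prop where
  bounded : ∃ C, ∀ m x, |DF m x| ≤ C
  cont : Continuous fun p : PM α × α => DF p.1 p.2
  deriv_eq : ∀ m m' : PM α,
    F m' - F m = ∫ lam in (0:ℝ)..1,
      (∫ x, DF (convComb lam m m') x ∂(m' : Measure α)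
        - ∫ x, DF (convComb lam m m') x ∂(m : Measure α))

/-- Convexity of a function of probability measures. -/
def ConvexPM {α : Type*} [MeasurableSpace α] (F : PM α → ℝ) : Prop :=
  ∀ (m m' : PM α) (a : ℝ), 0 ≤ a → a ≤ 1 →
    F (convComb a m m') ≤ (1 - a) * F m + a * F m'

/-- Assumptions on the Gibbs potential `U`. -/
structure GibbsPotential {d : ℕ} (U : Rd d → ℝ) : Prop where
  smooth : ContDiff ℝ (⊤ : ℕ∞) U
  lipGrad : ∃ K : ℝ≥0, LipschitzWith K (fun x => gradient U x)
  diss : ∃ cU cU' : ℝ, 0 < cU ∧ ∀ x : Rd d, cU * ‖x‖ ^ 2 + cU' ≤ ⟪gradient U x, x⟫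
  isDensity : ∫ x, Real.exp (-U x) = 1

/-- `ρ` is a density (w.r.t. Lebesgue) of the probability measure `m`, for which the
relative entropy integrand `ρ log ρ + ρ U` (note `log (ρ/e^{-U}) = log ρ + U`) is integrable. -/
def EntPred {d : ℕ} (U : Rd d → ℝ) (m : PM (Rd d)) (ρ : Rd d → ℝ) : Prop :=
  Measurable ρ ∧ (∀ x, 0 ≤ ρ x) ∧
    (m : Measure (Rd d)) = (volume : Measure (Rd d)).withDensity (fun x => ENNReal.ofReal (ρ x)) ∧
    Integrable (fun x => ρ x * Real.log (ρ x) + ρ x * U x)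

/-- The relative entropy `H(m) = ∫ m log (m / e^{-U})`, valued in `(-∞, ∞]`;
it equals `+∞` unless `m` is absolutely continuous with an integrable entropy integrand
(for probability measures the negative part of the integrand is always integrable, so this
agrees with the usual convention). -/
def relEnt {d : ℕ} (U : Rd d → ℝ) (m : PM (Rd d)) : EReal :=
  letI : Decidable (∃ ρ, EntPred U m ρ) := Classical.propDecidable _
  if h : ∃ ρ, EntPred U m ρ then
    ((∫ x, (h.choose x * Real.log (h.choose x) + h.choose x * U x) : ℝ) : EReal)
  else ⊤

/-- The free energy `V^σ(m) = F(m) + (σ²/2) H(m)`, valued in `(-∞, ∞]`. -/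
def freeEnergy {d : ℕ} (σ : ℝ) (U : Rd d → ℝ) (F : PM (Rd d) → ℝ) (m : PM (Rd d)) : EReal :=
  (F m : EReal) + ((σ ^ 2 / 2 : ℝ) : EReal) * relEnt U m

/-- The 2-Wasserstein distance. -/
def W2 {α : Type*} [MeasurableSpace α] [NormedAddCommGroup α] (μ ν : PM α) : ℝ :=
  sInf { r : ℝ | ∃ cpl : Measure (α × α),
    cpl.map Prod.fst = (μ : Measure α) ∧ cpl.map Prod.snd = (ν : Measure α) ∧
    r = ((∫⁻ p, ENNReal.ofReal (‖p.1 - p.2‖ ^ 2) ∂cpl).toReal) ^ (1 / 2 : ℝ) }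

/-- Divergence of a vector field on `ℝ^d`. -/
def diverg {d : ℕ} (v : Rd d → Rd d) (x : Rd d) : ℝ :=
  LinearMap.trace ℝ (Rd d) (fderiv ℝ v x : Rd d →ₗ[ℝ] Rd d)
/-- The parametrized feature `φ̂((β,α), z) = ℓ(β) φ(α·z)` of a 1-hidden-layer network. -/
def phiHat {k : ℕ} (l φ : ℝ → ℝ) (x : ℝ × Rd k) (z : Rd k) : ℝ := l x.1 * φ ⟪x.2, z⟫

/-- The objective `F(m) = ∫ Φ(y - E^m[φ̂(X,z)]) ν(dz,dy)` of the 1-hidden-layer network. -/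
def nnF {k : ℕ} (Φ : ℝ → ℝ) (ν : Measure (Rd k × ℝ)) (l φ : ℝ → ℝ)
    (m : PM (ℝ × Rd k)) : ℝ :=
  ∫ p, Φ (p.2 - ∫ x, phiHat l φ x p.1 ∂(m : Measure (ℝ × Rd k))) ∂ν

/-- Standing assumptions on the loss `Φ`, data measure `ν`, truncation `ℓ` and
activation `φ`. -/
structure NNAssumptions {k : ℕ} (Φ : ℝ → ℝ) (ν : Measure (Rd k × ℝ))
    (l φ : ℝ → ℝ) : Prop where
  Φ_convex : ConvexOn ℝ Set.univ Φ
  Φ_smooth : ContDiff ℝ (⊤ : ℕ∞) Φ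
  Φ_zero : Φ 0 = 0
  Φ_nonneg : ∀ a, 0 ≤ Φ a
  ν_prob : IsProbabilityMeasure ν
  ν_compact : ∃ K : Set (Rd k × ℝ), IsCompact K ∧ ν Kᶜ = 0
  l_smooth : ContDiff ℝ (⊤ : ℕ∞) l
  l_bdd : ∃ C, ∀ a, |l a| ≤ C ∧ |deriv l a| ≤ C ∧ |deriv (deriv l) a| ≤ C
  φ_smooth : ContDiff ℝ (⊤ : ℕ∞) φ
  φ_bdd : ∃ C, ∀ a, |φ a| ≤ C ∧ |deriv φ a| ≤ C ∧ |deriv (deriv φ) a| ≤ C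

/-- The candidate linear functional derivative of `nnF`:
`G(m,x) = -∫ Φ'(y - E^m[φ̂(X,z)]) φ̂(x,z) ν(dz,dy)`. -/
def nnDF {k : ℕ} (Φ : ℝ → ℝ) (ν : Measure (Rd k × ℝ)) (l φ : ℝ → ℝ)
    (m : PM (ℝ × Rd k)) (x : ℝ × Rd k) : ℝ :=
  -∫ p, deriv Φ (p.2 - ∫ x', phiHat l φ x' p.1 ∂(m : Measure (ℝ × Rd k)))
      * phiHat l φ x p.1 ∂ν

/-- The gradient `∇_x φ̂(x,z) = (ℓ'(β) φ(α·z), ℓ(β) φ'(α·z) z)` for `x = (β,α)`. -/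
def gradPhiHat {k : ℕ} (l φ : ℝ → ℝ) (x : ℝ × Rd k) (z : Rd k) : ℝ × Rd k :=
  (deriv l x.1 * φ ⟪x.2, z⟫, (l x.1 * deriv φ ⟪x.2, z⟫) • z)

/-- The intrinsic derivative of `nnF`:
`D_mF(m,x) = -∫ Φ'(y - E^m[φ̂(X,z)]) ∇_x φ̂(x,z) ν(dz,dy)`. -/
def nnDmF {k : ℕ} (Φ : ℝ → ℝ) (ν : Measure (Rd k × ℝ)) (l φ : ℝ → ℝ)
    (m : PM (ℝ × Rd k)) (x : ℝ × Rd k) : ℝ × Rd k :=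
  -∫ p, deriv Φ (p.2 - ∫ x', phiHat l φ x' p.1 ∂(m : Measure (ℝ × Rd k)))
      • gradPhiHat l φ x p.1 ∂ν

section NNAux

variable {k : ℕ}

/-- `E^m[φ̂(·,z)]`. -/
def gInt (l φ : ℝ → ℝ) (m : PM (ℝ × Rd k)) (z : Rd k) : ℝ :=
  ∫ x', phiHat l φ x' z ∂(m : Measure (ℝ × Rd k))

lemma phiHat_cont {l φ : ℝ → ℝ} (hl : Continuous l) (hφ : Continuous φ) :
    Continuous fun q : (ℝ × Rd k) × Rd k => phiHat l φ q.1 q.2 :=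
  (hl.comp (continuous_fst.fst)).mul
    (hφ.comp (continuous_inner.comp ((continuous_fst.snd).prodMk continuous_snd)))

lemma phiHat_cont_x {l φ : ℝ → ℝ} (hl : Continuous l) (hφ : Continuous φ) (z : Rd k) :
    Continuous fun x : ℝ × Rd k => phiHat l φ x z :=
  (phiHat_cont hl hφ).comp (continuous_id.prodMk continuous_const)

lemma phiHat_cont_z {l φ : ℝ → ℝ} (hl : Continuous l) (hφ : Continuous φ) (x : ℝ × Rd k) :
    Continuous fun z : Rd k => phiHat l φ x z :=
  (phiHat_cont hl hφ).comp (continuous_const.prodMk continuous_id)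

lemma phiHat_abs_le {l φ : ℝ → ℝ} {Cl Cφ : ℝ} (hCl : ∀ a, |l a| ≤ Cl) (hCφ : ∀ a, |φ a| ≤ Cφ)
    (x : ℝ × Rd k) (z : Rd k) : |phiHat l φ x z| ≤ Cl * Cφ := by
  rw [phiHat, abs_mul]
  exact mul_le_mul (hCl x.1) (hCφ _) (abs_nonneg _) ((abs_nonneg (l x.1)).trans (hCl x.1))

lemma gInt_abs_le {l φ : ℝ → ℝ} {Cl Cφ : ℝ} (hCl : ∀ a, |l a| ≤ Cl) (hCφ : ∀ a, |φ a| ≤ Cφ)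
    (m : PM (ℝ × Rd k)) (z : Rd k) : |gInt l φ m z| ≤ Cl * Cφ := by
  have := norm_integral_le_of_norm_le_const (μ := (m : Measure (ℝ × Rd k)))
    (f := fun x' => phiHat l φ x' z) (C := Cl * Cφ)
    (Filter.Eventually.of_forall fun x' => by
      simpa [Real.norm_eq_abs] using phiHat_abs_le hCl hCφ x' z)
  simpa [gInt, Real.norm_eq_abs] using this

lemma gInt_cont_z {l φ : ℝ → ℝ} {Cl Cφ : ℝ} (hl : Continuous l) (hφ : Continuous φ)
    (hCl : ∀ a, |l a| ≤ Cl) (hCφ : ∀ a, |φ a| ≤ Cφ) (m : PM (ℝ × Rd k)) :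
    Continuous (gInt l φ m) := by
  apply continuous_of_dominated (bound := fun _ => Cl * Cφ)
  · exact fun z => (phiHat_cont_x hl hφ z).aestronglyMeasurable
  · exact fun z => Eventually.of_forall fun x' => by
      simpa [Real.norm_eq_abs] using phiHat_abs_le hCl hCφ x' z
  · exact integrable_const _
  · exact Eventually.of_forall fun x' => phiHat_cont_z hl hφ x'

lemma gInt_cont_m {l φ : ℝ → ℝ} {Cl Cφ : ℝ} (hl : Continuous l) (hφ : Continuous φ)
    (hCl : ∀ a, |l a| ≤ Cl) (hCφ : ∀ a, |φ a| ≤ Cφ) (z : Rd k) :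
    Continuous fun m : PM (ℝ × Rd k) => gInt l φ m z := by
  let f : BoundedContinuousFunction (ℝ × Rd k) ℝ :=
    BoundedContinuousFunction.ofNormedAddCommGroup _ (phiHat_cont_x hl hφ z) (Cl * Cφ)
      (fun x => by simpa [Real.norm_eq_abs] using phiHat_abs_le hCl hCφ x z)
  exact MeasureTheory.ProbabilityMeasure.continuous_integral_boundedContinuousFunction f

lemma integral_convComb {α : Type*} [MeasurableSpace α] {f : α → ℝ} (lam : ℝ)
    (m m' : PM α) (hm : Integrable f (m : Measure α)) (hm' : Integrable f (m' : Measure α)) :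
    ∫ x, f x ∂(convComb lam m m' : Measure α)
      = (1 - max 0 (min lam 1)) * ∫ x, f x ∂(m : Measure α)
        + max 0 (min lam 1) * ∫ x, f x ∂(m' : Measure α) := by
  set t := max 0 (min lam 1) with ht
  have ht0 : 0 ≤ t := le_max_left _ _
  have ht1 : t ≤ 1 := max_le zero_le_one (min_le_right _ _)
  have hcoe : (convComb lam m m' : Measure α)
      = (ENNReal.ofReal (1 - t)) • (m : Measure α) + (ENNReal.ofReal t) • (m' : Measure α) := rfl
  rw [hcoe, integral_add_measure (hm.smul_measure ENNReal.ofReal_ne_top)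
      (hm'.smul_measure ENNReal.ofReal_ne_top),
    integral_smul_measure, integral_smul_measure, ENNReal.toReal_ofReal (by linarith),
    ENNReal.toReal_ofReal ht0]
  simp [smul_eq_mul]


lemma nnF_eq {k : ℕ} (Φ : ℝ → ℝ) (ν : Measure (Rd k × ℝ)) (l φ : ℝ → ℝ)
    (m : PM (ℝ × Rd k)) :
    nnF Φ ν l φ m = ∫ p, Φ (p.2 - gInt l φ m p.1) ∂ν := rfl

lemma nnDF_eq {k : ℕ} (Φ : ℝ → ℝ) (ν : Measure (Rd k × ℝ)) (l φ : ℝ → ℝ)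
    (m : PM (ℝ × Rd k)) (x : ℝ × Rd k) :
    nnDF Φ ν l φ m x = -∫ p, deriv Φ (p.2 - gInt l φ m p.1) * phiHat l φ x p.1 ∂ν := rfl

lemma nnDmF_eq {k : ℕ} (Φ : ℝ → ℝ) (ν : Measure (Rd k × ℝ)) (l φ : ℝ → ℝ)
    (m : PM (ℝ × Rd k)) (x : ℝ × Rd k) :
    nnDmF Φ ν l φ m x = -∫ p, deriv Φ (p.2 - gInt l φ m p.1) • gradPhiHat l φ x p.1 ∂ν := rfl

lemma gradPhiHat_cont {k : ℕ} {l φ : ℝ → ℝ} (hl : ContDiff ℝ (⊤ : ℕ∞) l) (hφ : ContDiff ℝ (⊤ : ℕ∞) φ) :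
    Continuous fun q : (ℝ × Rd k) × Rd k => gradPhiHat l φ q.1 q.2 := by
  have hlc := hl.continuous
  have hφc := hφ.continuous
  have hl' : Continuous (deriv l) := hl.continuous_deriv (by simp)
  have hφ' : Continuous (deriv φ) := hφ.continuous_deriv (by simp)
  have hin : Continuous fun q : (ℝ × Rd k) × Rd k => (⟪q.1.2, q.2⟫ : ℝ) :=
    (continuous_fst.snd).inner continuous_snd
  exact ((hl'.comp continuous_fst.fst).mul (hφc.comp hin)).prodMk
    (((hlc.comp continuous_fst.fst).mul (hφ'.comp hin)).smul continuous_snd)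

lemma gradPhiHat_norm_le {k : ℕ} {l φ : ℝ → ℝ} {Cl Cφ R : ℝ}
    (hCl1 : ∀ a, |l a| ≤ Cl) (hCl2 : ∀ a, |deriv l a| ≤ Cl)
    (hCφ1 : ∀ a, |φ a| ≤ Cφ) (hCφ2 : ∀ a, |deriv φ a| ≤ Cφ)
    (hR0 : 0 ≤ R) (x : ℝ × Rd k) {z : Rd k} (hz : ‖z‖ ≤ R) :
    ‖gradPhiHat l φ x z‖ ≤ Cl * Cφ * (1 + R) := by
  have hCl0 : 0 ≤ Cl := (abs_nonneg _).trans (hCl1 0)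
  have hCφ0 : 0 ≤ Cφ := (abs_nonneg _).trans (hCφ1 0)
  have hCC : 0 ≤ Cl * Cφ := mul_nonneg hCl0 hCφ0
  rw [gradPhiHat, Prod.norm_def]
  apply max_le
  · rw [Real.norm_eq_abs, abs_mul]
    calc |deriv l x.1| * |φ ⟪x.2, z⟫| ≤ Cl * Cφ :=
          mul_le_mul (hCl2 _) (hCφ1 _) (abs_nonneg _) hCl0
      _ ≤ Cl * Cφ * (1 + R) := by nlinarith
  · rw [norm_smul, Real.norm_eq_abs, abs_mul]
    calc |l x.1| * |deriv φ ⟪x.2, z⟫| * ‖z‖ ≤ Cl * Cφ * R := by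
          apply mul_le_mul (mul_le_mul (hCl1 _) (hCφ2 _) (abs_nonneg _) hCl0) hz (norm_nonneg _) hCC
      _ ≤ Cl * Cφ * (1 + R) := by nlinarith

lemma nn_cont_aux {k : ℕ} {l φ : ℝ → ℝ} {Cl Cφ M R : ℝ} {ν : Measure (Rd k × ℝ)}
    [IsProbabilityMeasure ν]
    (hl : ContDiff ℝ (⊤ : ℕ∞) l) (hφ : ContDiff ℝ (⊤ : ℕ∞) φ)
    (hCl1 : ∀ a, |l a| ≤ Cl) (hCl2 : ∀ a, |deriv l a| ≤ Cl)
    (hCφ1 : ∀ a, |φ a| ≤ Cφ) (hCφ2 : ∀ a, |deriv φ a| ≤ Cφ)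
    {c : (Rd k × ℝ) → ℝ} (hccont : Continuous c) (hcM : ∀ᵐ p ∂ν, |c p| ≤ M)
    (hM0 : 0 ≤ M) (hR : ∀ᵐ p ∂ν, ‖p.1‖ ≤ R) (hR0 : 0 ≤ R) :
    Continuous fun x : ℝ × Rd k => -∫ p, c p • gradPhiHat l φ x p.1 ∂ν := by
  apply Continuous.neg
  apply continuous_of_dominated (bound := fun _ => M * (Cl * Cφ * (1 + R)))
  · intro x
    exact ((hccont.smul ((gradPhiHat_cont hl hφ).comp
      ((continuous_const.prodMk continuous_fst) :
        Continuous fun p : Rd k × ℝ => ((x, p.1) : (ℝ × Rd k) × Rd k))))).aestronglyMeasurable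
  · intro x
    filter_upwards [hcM, hR] with p h1 h2
    rw [norm_smul, Real.norm_eq_abs]
    exact mul_le_mul h1 (gradPhiHat_norm_le hCl1 hCl2 hCφ1 hCφ2 hR0 x h2) (norm_nonneg _) hM0
  · exact integrable_const _
  · apply Eventually.of_forall
    intro p
    exact Continuous.const_smul ((gradPhiHat_cont hl hφ).comp
      ((continuous_id.prodMk continuous_const) :
        Continuous fun x : ℝ × Rd k => ((x, p.1) : (ℝ × Rd k) × Rd k))) (c p)

lemma nn_hasDerivAt_aux {k : ℕ} {l φ : ℝ → ℝ} {Cl Cφ M R : ℝ} {ν : Measure (Rd k × ℝ)}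
    [IsProbabilityMeasure ν]
    (hl : ContDiff ℝ (⊤ : ℕ∞) l) (hφ : ContDiff ℝ (⊤ : ℕ∞) φ)
    (hCl1 : ∀ a, |l a| ≤ Cl) (hCl2 : ∀ a, |deriv l a| ≤ Cl)
    (hCφ1 : ∀ a, |φ a| ≤ Cφ) (hCφ2 : ∀ a, |deriv φ a| ≤ Cφ)
    {c : (Rd k × ℝ) → ℝ} (hccont : Continuous c) (hcM : ∀ᵐ p ∂ν, |c p| ≤ M)
    (hM0 : 0 ≤ M) (hR : ∀ᵐ p ∂ν, ‖p.1‖ ≤ R) (hR0 : 0 ≤ R)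
    (x v : ℝ × Rd k) :
    HasDerivAt (fun t : ℝ => -∫ p, c p * phiHat l φ (x + t • v) p.1 ∂ν)
      ((-∫ p, c p • gradPhiHat l φ x p.1 ∂ν : ℝ × Rd k).1 * v.1
        + ⟪(-∫ p, c p • gradPhiHat l φ x p.1 ∂ν : ℝ × Rd k).2, v.2⟫) 0 := by
  have hlc := hl.continuous
  have hφc := hφ.continuous
  have hl' : Continuous (deriv l) := hl.continuous_deriv (by simp)
  have hφ' : Continuous (deriv φ) := hφ.continuous_deriv (by simp)
  have hld : Differentiable ℝ l := hl.differentiable (by simp)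
  have hφd : Differentiable ℝ φ := hφ.differentiable (by simp)
  have hCl0 : 0 ≤ Cl := (abs_nonneg _).trans (hCl1 0)
  have hCφ0 : 0 ≤ Cφ := (abs_nonneg _).trans (hCφ1 0)
  have hip : Continuous fun p : Rd k × ℝ => (⟪x.2, p.1⟫ : ℝ) :=
    continuous_const.inner continuous_fst
  have hiv : Continuous fun p : Rd k × ℝ => (⟪v.2, p.1⟫ : ℝ) :=
    continuous_const.inner continuous_fst
  have hFmeas : ∀ t : ℝ, Continuous fun p : Rd k × ℝ =>
      c p * (l (x.1 + t * v.1) * φ (⟪x.2, p.1⟫ + t * ⟪v.2, p.1⟫)) := fun t =>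
    hccont.mul (continuous_const.mul (hφc.comp (hip.add (continuous_const.mul hiv))))
  have hF'meas : ∀ t : ℝ, Continuous fun p : Rd k × ℝ =>
      c p * (deriv l (x.1 + t * v.1) * v.1 * φ (⟪x.2, p.1⟫ + t * ⟪v.2, p.1⟫)
        + l (x.1 + t * v.1) * deriv φ (⟪x.2, p.1⟫ + t * ⟪v.2, p.1⟫) * ⟪v.2, p.1⟫) := fun t =>
    hccont.mul (((continuous_const.mul continuous_const).mul
        (hφc.comp (hip.add (continuous_const.mul hiv)))).add
      ((continuous_const.mul (hφ'.comp (hip.add (continuous_const.mul hiv)))).mul hiv))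
  have key := hasDerivAt_integral_of_dominated_loc_of_deriv_le (μ := ν) (x₀ := (0:ℝ))
    (F := fun (t : ℝ) (p : Rd k × ℝ) =>
      c p * (l (x.1 + t * v.1) * φ (⟪x.2, p.1⟫ + t * ⟪v.2, p.1⟫)))
    (F' := fun (t : ℝ) (p : Rd k × ℝ) =>
      c p * (deriv l (x.1 + t * v.1) * v.1 * φ (⟪x.2, p.1⟫ + t * ⟪v.2, p.1⟫)
        + l (x.1 + t * v.1) * deriv φ (⟪x.2, p.1⟫ + t * ⟪v.2, p.1⟫) * ⟪v.2, p.1⟫))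
    (bound := fun _ => M * (Cl * Cφ * |v.1| + Cl * Cφ * (‖v.2‖ * R)))
    (Metric.ball_mem_nhds _ one_pos)
    (Eventually.of_forall fun t => (hFmeas t).aestronglyMeasurable)
    ?_ ((hF'meas 0).aestronglyMeasurable) ?_ (integrable_const _) ?_
  · -- use key
    have hfeq : (fun t : ℝ => -∫ p, c p * phiHat l φ (x + t • v) p.1 ∂ν)
        = fun t : ℝ => -∫ p,
            c p * (l (x.1 + t * v.1) * φ (⟪x.2, p.1⟫ + t * ⟪v.2, p.1⟫)) ∂ν := by
      simp only [phiHat, Prod.fst_add, Prod.snd_add, Prod.smul_fst, Prod.smul_snd,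
        smul_eq_mul, inner_add_left, real_inner_smul_left]
    have hgradcont : Continuous fun p : Rd k × ℝ => gradPhiHat l φ x p.1 :=
      (gradPhiHat_cont hl hφ).comp (continuous_const.prodMk continuous_fst)
    have hq : Integrable (fun p => c p • gradPhiHat l φ x p.1) ν := by
      apply Integrable.mono' (integrable_const (M * (Cl * Cφ * (1 + R))))
      · exact (hccont.smul hgradcont).aestronglyMeasurable
      · filter_upwards [hcM, hR] with p h1 h2
        rw [norm_smul, Real.norm_eq_abs]
        exact mul_le_mul h1 (gradPhiHat_norm_le hCl1 hCl2 hCφ1 hCφ2 hR0 x h2) (norm_nonneg _) hM0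
    set L : (ℝ × Rd k) →L[ℝ] ℝ :=
      v.1 • ContinuousLinearMap.fst ℝ ℝ (Rd k)
        + (innerSL ℝ v.2).comp (ContinuousLinearMap.snd ℝ ℝ (Rd k)) with hLdef
    have hLapp : ∀ w : ℝ × Rd k, L w = v.1 * w.1 + ⟪v.2, w.2⟫ := fun w => rfl
    have hval : ((-∫ p, c p • gradPhiHat l φ x p.1 ∂ν : ℝ × Rd k).1 * v.1
        + ⟪(-∫ p, c p • gradPhiHat l φ x p.1 ∂ν : ℝ × Rd k).2, v.2⟫)
        = -∫ p, c p * (deriv l (x.1 + 0 * v.1) * v.1 * φ (⟪x.2, p.1⟫ + 0 * ⟪v.2, p.1⟫)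
            + l (x.1 + 0 * v.1) * deriv φ (⟪x.2, p.1⟫ + 0 * ⟪v.2, p.1⟫) * ⟪v.2, p.1⟫) ∂ν := by
      have h1 : ((-∫ p, c p • gradPhiHat l φ x p.1 ∂ν : ℝ × Rd k).1 * v.1
          + ⟪(-∫ p, c p • gradPhiHat l φ x p.1 ∂ν : ℝ × Rd k).2, v.2⟫)
          = L (-∫ p, c p • gradPhiHat l φ x p.1 ∂ν) := by
        rw [hLapp, real_inner_comm]
        ring
      rw [h1, map_neg, ← ContinuousLinearMap.integral_comp_comm L hq]
      congr 1
      apply integral_congr_ae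
      apply ae_of_all
      intro p
      simp only [hLapp, gradPhiHat, Prod.smul_fst, Prod.smul_snd, smul_eq_mul, smul_smul,
        real_inner_smul_right, zero_mul, add_zero]
      ring
    rw [hfeq, hval]
    exact key.2.neg
  · -- integrability of F 0
    apply Integrable.mono' (integrable_const (M * (Cl * Cφ)))
      (hFmeas 0).aestronglyMeasurable
    filter_upwards [hcM] with p hp
    rw [Real.norm_eq_abs, abs_mul]
    apply mul_le_mul hp ?_ (abs_nonneg _) hM0
    rw [abs_mul]
    exact mul_le_mul (hCl1 _) (hCφ1 _) (abs_nonneg _) hCl0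
  · -- bound
    filter_upwards [hcM, hR] with p h1 h2
    intro t ht
    rw [Real.norm_eq_abs, abs_mul]
    apply mul_le_mul h1 ?_ (abs_nonneg _) hM0
    calc |deriv l (x.1 + t * v.1) * v.1 * φ (⟪x.2, p.1⟫ + t * ⟪v.2, p.1⟫)
          + l (x.1 + t * v.1) * deriv φ (⟪x.2, p.1⟫ + t * ⟪v.2, p.1⟫) * ⟪v.2, p.1⟫|
        ≤ |deriv l (x.1 + t * v.1) * v.1 * φ (⟪x.2, p.1⟫ + t * ⟪v.2, p.1⟫)|
          + |l (x.1 + t * v.1) * deriv φ (⟪x.2, p.1⟫ + t * ⟪v.2, p.1⟫) * ⟪v.2, p.1⟫| :=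
          abs_add_le _ _
      _ ≤ Cl * Cφ * |v.1| + Cl * Cφ * (‖v.2‖ * R) := by
          apply add_le_add
          · rw [abs_mul, abs_mul]
            calc |deriv l (x.1 + t * v.1)| * |v.1| * |φ (⟪x.2, p.1⟫ + t * ⟪v.2, p.1⟫)|
                ≤ (Cl * |v.1|) * Cφ :=
                  mul_le_mul (mul_le_mul_of_nonneg_right (hCl2 _) (abs_nonneg _)) (hCφ1 _)
                    (abs_nonneg _) (mul_nonneg hCl0 (abs_nonneg _))
              _ = Cl * Cφ * |v.1| := by ring
          · rw [abs_mul, abs_mul]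
            have hin : |(⟪v.2, p.1⟫ : ℝ)| ≤ ‖v.2‖ * R :=
              (abs_real_inner_le_norm _ _).trans
                (mul_le_mul_of_nonneg_left h2 (norm_nonneg _))
            exact mul_le_mul (mul_le_mul (hCl1 _) (hCφ2 _) (abs_nonneg _) hCl0) hin
              (abs_nonneg _) (mul_nonneg hCl0 hCφ0)
  · -- differentiability
    apply Eventually.of_forall
    intro p t ht
    have hd1 : HasDerivAt (fun s : ℝ => x.1 + s * v.1) v.1 t := by
      simpa using (hasDerivAt_mul_const v.1).const_add x.1
    have hd2 : HasDerivAt (fun s : ℝ => (⟪x.2, p.1⟫ : ℝ) + s * ⟪v.2, p.1⟫)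
        (⟪v.2, p.1⟫ : ℝ) t := by
      simpa using (hasDerivAt_mul_const ((⟪v.2, p.1⟫ : ℝ))).const_add ((⟪x.2, p.1⟫ : ℝ))
    have hd3 : HasDerivAt (fun s : ℝ => l (x.1 + s * v.1)) (deriv l (x.1 + t * v.1) * v.1) t :=
      (hld _).hasDerivAt.comp t hd1
    have hd4 : HasDerivAt (fun s : ℝ => φ (⟪x.2, p.1⟫ + s * ⟪v.2, p.1⟫))
        (deriv φ (⟪x.2, p.1⟫ + t * ⟪v.2, p.1⟫) * ⟪v.2, p.1⟫) t :=
      (hφd _).hasDerivAt.comp t hd2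
    have hd5 := (hd3.mul hd4).const_mul (c p)
    have heq : (c p * (deriv l (x.1 + t * v.1) * v.1 * φ (⟪x.2, p.1⟫ + t * ⟪v.2, p.1⟫)
        + l (x.1 + t * v.1) * deriv φ (⟪x.2, p.1⟫ + t * ⟪v.2, p.1⟫) * ⟪v.2, p.1⟫))
        = c p * (deriv l (x.1 + t * v.1) * v.1 * φ (⟪x.2, p.1⟫ + t * ⟪v.2, p.1⟫)
        + l (x.1 + t * v.1) * (deriv φ (⟪x.2, p.1⟫ + t * ⟪v.2, p.1⟫) * ⟪v.2, p.1⟫)) := by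
      ring
    have hgoal : HasDerivAt (fun s : ℝ =>
        c p * (l (x.1 + s * v.1) * φ (⟪x.2, p.1⟫ + s * ⟪v.2, p.1⟫)))
        (c p * (deriv l (x.1 + t * v.1) * v.1 * φ (⟪x.2, p.1⟫ + t * ⟪v.2, p.1⟫)
          + l (x.1 + t * v.1) * deriv φ (⟪x.2, p.1⟫ + t * ⟪v.2, p.1⟫) * ⟪v.2, p.1⟫)) t := by
      rw [heq]
      exact hd5
    exact hgoal


end NNAux

/-- **The network objective `F` is of class `C¹`**: `G = nnDF` is its bounded, jointly
continuous linear functional derivative, and `G(m,·)` is continuously differentiable with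
gradient `∇_x G(m,x) = -∫ Φ'(y - E^m[φ̂(X,z)]) ∇_x φ̂(x,z) ν(dz,dy)`. -/
theorem nnF_isC1 {k : ℕ} (Φ : ℝ → ℝ) (ν : Measure (Rd k × ℝ)) (l φ : ℝ → ℝ)
    (h : NNAssumptions Φ ν l φ) :
    IsC1 (nnF Φ ν l φ) (nnDF Φ ν l φ) ∧
    (∀ (m : PM (ℝ × Rd k)) (x v : ℝ × Rd k),
      HasDerivAt (fun t : ℝ => nnDF Φ ν l φ m (x + t • v))
        ((nnDmF Φ ν l φ m x).1 * v.1 + ⟪(nnDmF Φ ν l φ m x).2, v.2⟫) 0) ∧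
    (∀ m : PM (ℝ × Rd k), Continuous (nnDmF Φ ν l φ m)) := by
  classical
  haveI := h.ν_prob
  obtain ⟨Cl, hCl⟩ := h.l_bdd
  obtain ⟨Cφ, hCφ⟩ := h.φ_bdd
  have hCl1 : ∀ a, |l a| ≤ Cl := fun a => (hCl a).1
  have hCl2 : ∀ a, |deriv l a| ≤ Cl := fun a => (hCl a).2.1
  have hCφ1 : ∀ a, |φ a| ≤ Cφ := fun a => (hCφ a).1
  have hCφ2 : ∀ a, |deriv φ a| ≤ Cφ := fun a => (hCφ a).2.1
  have hCl0 : 0 ≤ Cl := (abs_nonneg _).trans (hCl1 0)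
  have hCφ0 : 0 ≤ Cφ := (abs_nonneg _).trans (hCφ1 0)
  have hl : Continuous l := h.l_smooth.continuous
  have hφc : Continuous φ := h.φ_smooth.continuous
  have hΦd : Differentiable ℝ Φ := h.Φ_smooth.differentiable (by simp)
  have hΦ' : Continuous (deriv Φ) := h.Φ_smooth.continuous_deriv (by simp)
  have hΦc : Continuous Φ := h.Φ_smooth.continuous
  set B := Cl * Cφ with hBdef
  have hB0 : 0 ≤ B := mul_nonneg hCl0 hCφ0
  obtain ⟨K, hKc, hKν⟩ := h.ν_compact
  have hKae : ∀ᵐ p ∂ν, p ∈ K := by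
    rw [ae_iff]
    exact hKν
  obtain ⟨R₀, hR₀⟩ := hKc.isBounded.subset_closedBall 0
  set R := max R₀ 0 with hRdef
  have hR0 : 0 ≤ R := le_max_right _ _
  have hKR : ∀ p ∈ K, ‖p.1‖ ≤ R ∧ |p.2| ≤ R := by
    intro p hp
    have hn : ‖p‖ ≤ R :=
      le_trans (by simpa [mem_closedBall_zero_iff] using hR₀ hp) (le_max_left _ _)
    exact ⟨(norm_fst_le p).trans hn, (norm_snd_le p).trans hn⟩
  obtain ⟨M, hM⟩ := (isCompact_Icc (a := -(R + 6*B + 3))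
    (b := R + 6*B + 3)).exists_bound_of_continuousOn hΦ'.continuousOn
  obtain ⟨MΦ, hMΦ⟩ := (isCompact_Icc (a := -(R + 6*B + 3))
    (b := R + 6*B + 3)).exists_bound_of_continuousOn hΦc.continuousOn
  have hMabs : ∀ u : ℝ, |u| ≤ R + 6*B + 3 → |deriv Φ u| ≤ M := by
    intro u hu
    simpa [Real.norm_eq_abs] using hM u (Set.mem_Icc.mpr (abs_le.mp hu))
  have hMΦabs : ∀ u : ℝ, |u| ≤ R + 6*B + 3 → |Φ u| ≤ MΦ := by
    intro u hu
    simpa [Real.norm_eq_abs] using hMΦ u (Set.mem_Icc.mpr (abs_le.mp hu))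
  have hM0 : 0 ≤ M := (abs_nonneg _).trans (hMabs 0 (by rw [abs_zero]; linarith))
  have hgz : ∀ m : PM (ℝ × Rd k), Continuous (gInt l φ m) :=
    fun m => gInt_cont_z hl hφc hCl1 hCφ1 m
  have hgm : ∀ z : Rd k, Continuous fun m : PM (ℝ × Rd k) => gInt l φ m z :=
    fun z => gInt_cont_m hl hφc hCl1 hCφ1 z
  have hgB : ∀ (m : PM (ℝ × Rd k)) (z : Rd k), |gInt l φ m z| ≤ B :=
    fun m z => gInt_abs_le hCl1 hCφ1 m z
  have hphiB : ∀ (x : ℝ × Rd k) (z : Rd k), |phiHat l φ x z| ≤ B :=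
    fun x z => phiHat_abs_le hCl1 hCφ1 x z
  have hIntb : ∀ {f : Rd k × ℝ → ℝ} {C : ℝ}, AEStronglyMeasurable f ν →
      (∀ᵐ p ∂ν, |f p| ≤ C) → Integrable f ν := by
    intro f C hf hC
    exact Integrable.mono' (integrable_const C) hf (by simpa [Real.norm_eq_abs] using hC)
  have hcM : ∀ m : PM (ℝ × Rd k), ∀ᵐ p ∂ν, |deriv Φ (p.2 - gInt l φ m p.1)| ≤ M := by
    intro m
    filter_upwards [hKae] with p hp
    apply hMabs
    have h1 := (hKR p hp).2
    have h2 := hgB m p.1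
    have h3 := abs_sub p.2 (gInt l φ m p.1)
    linarith
  have hcc : ∀ m : PM (ℝ × Rd k),
      Continuous fun p : Rd k × ℝ => deriv Φ (p.2 - gInt l φ m p.1) :=
    fun m => hΦ'.comp (continuous_snd.sub ((hgz m).comp continuous_fst))
  have hinKb : ∀ᵐ p ∂ν, ‖p.1‖ ≤ R := by
    filter_upwards [hKae] with p hp
    exact (hKR p hp).1
  refine ⟨⟨⟨M * B, fun m x => ?_⟩, ?_, ?_⟩, ?_, ?_⟩
  · -- bounded
    rw [nnDF_eq, abs_neg]
    have hb : ∀ᵐ p ∂ν, ‖deriv Φ (p.2 - gInt l φ m p.1) * phiHat l φ x p.1‖ ≤ M * B := by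
      filter_upwards [hcM m] with p hp
      rw [Real.norm_eq_abs, abs_mul]
      exact mul_le_mul hp (hphiB x p.1) (abs_nonneg _) hM0
    have := norm_integral_le_of_norm_le_const hb
    simpa [Real.norm_eq_abs] using this
  · -- joint continuity
    have hjc := continuous_of_dominated (μ := ν)
      (F := fun (q : PM (ℝ × Rd k) × (ℝ × Rd k)) (p : Rd k × ℝ) =>
        deriv Φ (p.2 - gInt l φ q.1 p.1) * phiHat l φ q.2 p.1)
      (bound := fun _ => M * B)
      (fun q => ((hcc q.1).mul
        ((phiHat_cont_z hl hφc q.2).comp continuous_fst)).aestronglyMeasurable)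
      (fun q => by
        filter_upwards [hcM q.1] with p hp
        rw [Real.norm_eq_abs, abs_mul]
        exact mul_le_mul hp (hphiB q.2 p.1) (abs_nonneg _) hM0)
      (integrable_const _)
      (Eventually.of_forall fun p => by
        have h1 : Continuous fun q : PM (ℝ × Rd k) × (ℝ × Rd k) =>
            deriv Φ (p.2 - gInt l φ q.1 p.1) :=
          hΦ'.comp (continuous_const.sub ((hgm p.1).comp continuous_fst))
        exact h1.mul ((phiHat_cont_x hl hφc p.1).comp continuous_snd))
    have heq2 : (fun q : PM (ℝ × Rd k) × (ℝ × Rd k) => nnDF Φ ν l φ q.1 q.2)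
        = fun q => -(∫ p, deriv Φ (p.2 - gInt l φ q.1 p.1) * phiHat l φ q.2 p.1 ∂ν) :=
      funext fun q => nnDF_eq Φ ν l φ q.1 q.2
    rw [heq2]
    exact hjc.neg
  · -- deriv_eq
    intro m m'
    have hACont : ∀ t : ℝ, Continuous fun p : Rd k × ℝ =>
        p.2 - gInt l φ m p.1 - t * (gInt l φ m' p.1 - gInt l φ m p.1) := fun t =>
      (continuous_snd.sub ((hgz m).comp continuous_fst)).sub
        (continuous_const.mul (((hgz m').comp continuous_fst).sub ((hgz m).comp continuous_fst)))
    have hargpt : ∀ p ∈ K, ∀ t : ℝ, |t| ≤ 2 →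
        |p.2 - gInt l φ m p.1 - t * (gInt l φ m' p.1 - gInt l φ m p.1)| ≤ R + 6*B + 3 := by
      intro p hp t ht
      have h1 := (hKR p hp).2
      have h2 := hgB m p.1
      have h3 := hgB m' p.1
      have hba : |gInt l φ m' p.1 - gInt l φ m p.1| ≤ 2 * B := by
        have := abs_sub (gInt l φ m' p.1) (gInt l φ m p.1)
        linarith
      have h4 : |t * (gInt l φ m' p.1 - gInt l φ m p.1)| ≤ 4 * B := by
        rw [abs_mul]
        calc |t| * |gInt l φ m' p.1 - gInt l φ m p.1| ≤ 2 * (2*B) :=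
            mul_le_mul ht hba (abs_nonneg _) (by norm_num)
          _ = 4 * B := by ring
      have h5 := abs_sub (p.2 - gInt l φ m p.1)
        (t * (gInt l φ m' p.1 - gInt l φ m p.1))
      have h6 := abs_sub p.2 (gInt l φ m p.1)
      linarith
    have harg : ∀ᵐ p ∂ν, ∀ t : ℝ, |t| ≤ 2 →
        |p.2 - gInt l φ m p.1 - t * (gInt l φ m' p.1 - gInt l φ m p.1)| ≤ R + 6*B + 3 := by
      filter_upwards [hKae] with p hp
      exact hargpt p hp
    have hba2 : ∀ p : Rd k × ℝ, |gInt l φ m' p.1 - gInt l φ m p.1| ≤ 2 * B := by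
      intro p
      have h2 := hgB m p.1
      have h3 := hgB m' p.1
      have := abs_sub (gInt l φ m' p.1) (gInt l φ m p.1)
      linarith
    set G : ℝ → ℝ := fun t => ∫ p, Φ (p.2 - gInt l φ m p.1
        - t * (gInt l φ m' p.1 - gInt l φ m p.1)) ∂ν with hGdef
    set G' : ℝ → ℝ := fun t => ∫ p, -(deriv Φ (p.2 - gInt l φ m p.1
        - t * (gInt l φ m' p.1 - gInt l φ m p.1))
        * (gInt l φ m' p.1 - gInt l φ m p.1)) ∂ν with hG'def
    have hGderiv : ∀ t ∈ Set.uIcc (0:ℝ) 1, HasDerivAt G (G' t) t := by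
      intro t ht
      rw [Set.uIcc_of_le (by norm_num : (0:ℝ) ≤ 1), Set.mem_Icc] at ht
      have key := hasDerivAt_integral_of_dominated_loc_of_deriv_le (μ := ν) (x₀ := t)
        (F := fun s p => Φ (p.2 - gInt l φ m p.1
          - s * (gInt l φ m' p.1 - gInt l φ m p.1)))
        (F' := fun s p => -(deriv Φ (p.2 - gInt l φ m p.1
          - s * (gInt l φ m' p.1 - gInt l φ m p.1))
          * (gInt l φ m' p.1 - gInt l φ m p.1)))
        (bound := fun _ => M * (2 * B)) (Metric.ball_mem_nhds _ one_pos)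
        (Eventually.of_forall fun s => (hΦc.comp (hACont s)).aestronglyMeasurable)
        ?_
        (((hΦ'.comp (hACont t)).mul
          (((hgz m').comp continuous_fst).sub
            ((hgz m).comp continuous_fst))).neg.aestronglyMeasurable)
        ?_ (integrable_const _) ?_
      · exact key.2
      · apply hIntb (hΦc.comp (hACont t)).aestronglyMeasurable
        filter_upwards [harg] with p hp
        exact hMΦabs _ (hp t (by rw [abs_le]; exact ⟨by linarith [ht.1], by linarith [ht.2]⟩))
      · filter_upwards [harg] with p hp s hs
        rw [Real.norm_eq_abs, abs_neg, abs_mul]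
        have hs2 : |s| ≤ 2 := by
          rw [Metric.mem_ball, Real.dist_eq] at hs
          have h7 : |s| ≤ |s - t| + |t| := by
            calc |s| = |(s - t) + t| := by ring_nf
              _ ≤ |s - t| + |t| := abs_add_le _ _
          have h8 : |t| ≤ 1 := abs_le.mpr ⟨by linarith [ht.1], ht.2⟩
          linarith
        exact mul_le_mul (hMabs _ (hp s hs2)) (hba2 p) (abs_nonneg _) hM0
      · apply Eventually.of_forall
        intro p s hs
        have hlin : HasDerivAt (fun s : ℝ => p.2 - gInt l φ m p.1
            - s * (gInt l φ m' p.1 - gInt l φ m p.1))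
            (-(gInt l φ m' p.1 - gInt l φ m p.1)) s :=
          (hasDerivAt_mul_const (gInt l φ m' p.1 - gInt l φ m p.1)).const_sub
            (p.2 - gInt l φ m p.1)
        have hcomp := (hΦd _).hasDerivAt.comp s hlin
        have heq : -(deriv Φ (p.2 - gInt l φ m p.1
              - s * (gInt l φ m' p.1 - gInt l φ m p.1))
              * (gInt l φ m' p.1 - gInt l φ m p.1))
            = deriv Φ (p.2 - gInt l φ m p.1 - s * (gInt l φ m' p.1 - gInt l φ m p.1))
              * -(gInt l φ m' p.1 - gInt l φ m p.1) := by ring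
        have hgoal : HasDerivAt (fun s : ℝ => Φ (p.2 - gInt l φ m p.1
            - s * (gInt l φ m' p.1 - gInt l φ m p.1)))
            (-(deriv Φ (p.2 - gInt l φ m p.1 - s * (gInt l φ m' p.1 - gInt l φ m p.1))
              * (gInt l φ m' p.1 - gInt l φ m p.1))) s := by
          rw [heq]
          exact hcomp
        exact hgoal
    have hG'cont : ContinuousOn G' (Set.uIcc (0:ℝ) 1) := by
      rw [hG'def]
      apply continuousOn_of_dominated (bound := fun _ => M * (2 * B))
      · intro s _
        exact ((hΦ'.comp (hACont s)).mul
          (((hgz m').comp continuous_fst).sub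
            ((hgz m).comp continuous_fst))).neg.aestronglyMeasurable
      · intro s hs
        rw [Set.uIcc_of_le (by norm_num : (0:ℝ) ≤ 1), Set.mem_Icc] at hs
        filter_upwards [harg] with p hp
        rw [Real.norm_eq_abs, abs_neg, abs_mul]
        exact mul_le_mul
          (hMabs _ (hp s (by rw [abs_le]; exact ⟨by linarith [hs.1], by linarith [hs.2]⟩)))
          (hba2 p) (abs_nonneg _) hM0
      · exact integrable_const _
      · apply Eventually.of_forall
        intro p
        apply Continuous.continuousOn
        have hconts : Continuous fun s : ℝ => p.2 - gInt l φ m p.1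
            - s * (gInt l φ m' p.1 - gInt l φ m p.1) :=
          continuous_const.sub (continuous_id.mul continuous_const)
        exact ((hΦ'.comp hconts).mul continuous_const).neg
    have hG'int : IntervalIntegrable G' MeasureTheory.volume 0 1 :=
      hG'cont.intervalIntegrable
    have hftc : ∫ t in (0:ℝ)..1, G' t = G 1 - G 0 :=
      intervalIntegral.integral_eq_sub_of_hasDerivAt hGderiv hG'int
    have hG0 : G 0 = nnF Φ ν l φ m := by
      simp [hGdef, nnF_eq]
    have hG1 : G 1 = nnF Φ ν l φ m' := by
      simp only [hGdef, nnF_eq]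
      apply integral_congr_ae
      apply ae_of_all
      intro p
      congr 1
      ring
    have hstep : ∀ lam ∈ Set.uIcc (0:ℝ) 1,
        (∫ x, nnDF Φ ν l φ (convComb lam m m') x ∂(m' : Measure (ℝ × Rd k))
          - ∫ x, nnDF Φ ν l φ (convComb lam m m') x ∂(m : Measure (ℝ × Rd k))) = G' lam := by
      intro lam hlam
      rw [Set.uIcc_of_le (by norm_num : (0:ℝ) ≤ 1), Set.mem_Icc] at hlam
      have hlam2 : |lam| ≤ 2 := abs_le.mpr ⟨by linarith [hlam.1], by linarith [hlam.2]⟩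
      have hclamp : max 0 (min lam 1) = lam := by
        rw [min_eq_left hlam.2, max_eq_right hlam.1]
      have hgc : ∀ z : Rd k, gInt l φ (convComb lam m m') z
          = (1 - lam) * gInt l φ m z + lam * gInt l φ m' z := by
        intro z
        have hi : ∀ μ : PM (ℝ × Rd k),
            Integrable (fun x' => phiHat l φ x' z) (μ : Measure (ℝ × Rd k)) := by
          intro μ
          apply Integrable.mono' (integrable_const (Cl * Cφ))
            (phiHat_cont_x hl hφc z).aestronglyMeasurable
          exact Eventually.of_forall fun x' => by
            simpa [Real.norm_eq_abs] using phiHat_abs_le hCl1 hCφ1 x' z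
        have := integral_convComb lam m m' (hi m) (hi m')
        rw [hclamp] at this
        exact this
      have hnn : ∀ x : ℝ × Rd k, nnDF Φ ν l φ (convComb lam m m') x
          = -∫ p, deriv Φ (p.2 - gInt l φ m p.1
              - lam * (gInt l φ m' p.1 - gInt l φ m p.1)) * phiHat l φ x p.1 ∂ν := by
        intro x
        rw [nnDF_eq]
        congr 1
        apply integral_congr_ae
        apply ae_of_all
        intro p
        have hr : p.2 - gInt l φ (convComb lam m m') p.1
            = p.2 - gInt l φ m p.1 - lam * (gInt l φ m' p.1 - gInt l φ m p.1) := by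
          rw [hgc p.1]; ring
        simp only [hr]
      have hswap : ∀ μ : PM (ℝ × Rd k),
          ∫ x, (-∫ p, deriv Φ (p.2 - gInt l φ m p.1
              - lam * (gInt l φ m' p.1 - gInt l φ m p.1)) * phiHat l φ x p.1 ∂ν)
            ∂(μ : Measure (ℝ × Rd k))
          = -∫ p, deriv Φ (p.2 - gInt l φ m p.1
              - lam * (gInt l φ m' p.1 - gInt l φ m p.1)) * gInt l φ μ p.1 ∂ν := by
        intro μ
        rw [integral_neg]
        congr 1
        have hprodae : ∀ᵐ q ∂((μ : Measure (ℝ × Rd k)).prod ν), q.2 ∈ K := by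
          rw [ae_iff]
          have hset : {q : (ℝ × Rd k) × (Rd k × ℝ) | ¬ q.2 ∈ K} = Set.univ ×ˢ Kᶜ := by
            ext q; simp
          rw [hset, Measure.prod_prod, hKν, mul_zero]
        have hint : Integrable (Function.uncurry fun (x : ℝ × Rd k) (p : Rd k × ℝ) =>
            deriv Φ (p.2 - gInt l φ m p.1 - lam * (gInt l φ m' p.1 - gInt l φ m p.1))
              * phiHat l φ x p.1) ((μ : Measure (ℝ × Rd k)).prod ν) := by
          rw [Function.uncurry_def]
          apply Integrable.mono' (integrable_const (M * B))
          · have hcu : Continuous fun q : (ℝ × Rd k) × (Rd k × ℝ) =>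
                deriv Φ (q.2.2 - gInt l φ m q.2.1
                  - lam * (gInt l φ m' q.2.1 - gInt l φ m q.2.1)) * phiHat l φ q.1 q.2.1 :=
              (hΦ'.comp ((hACont lam).comp continuous_snd)).mul
                ((phiHat_cont hl hφc).comp (continuous_fst.prodMk continuous_snd.fst))
            exact hcu.aestronglyMeasurable
          · filter_upwards [hprodae] with q hq
            rw [Real.norm_eq_abs, abs_mul]
            exact mul_le_mul (hMabs _ (hargpt q.2 hq lam hlam2)) (hphiB q.1 q.2.1)
              (abs_nonneg _) hM0
        rw [MeasureTheory.integral_integral_swap hint]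
        apply integral_congr_ae
        apply ae_of_all
        intro p
        simp only [MeasureTheory.integral_const_mul, gInt]
      have hia : Integrable (fun p : Rd k × ℝ => deriv Φ (p.2 - gInt l φ m p.1
          - lam * (gInt l φ m' p.1 - gInt l φ m p.1)) * gInt l φ m p.1) ν := by
        apply hIntb ((hΦ'.comp (hACont lam)).mul
          ((hgz m).comp continuous_fst)).aestronglyMeasurable
        filter_upwards [hKae] with p hp
        simp only [Pi.mul_apply, Function.comp_apply]
        rw [abs_mul]
        exact mul_le_mul (hMabs _ (hargpt p hp lam hlam2)) (hgB m p.1) (abs_nonneg _) hM0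
      have hib : Integrable (fun p : Rd k × ℝ => deriv Φ (p.2 - gInt l φ m p.1
          - lam * (gInt l φ m' p.1 - gInt l φ m p.1)) * gInt l φ m' p.1) ν := by
        apply hIntb ((hΦ'.comp (hACont lam)).mul
          ((hgz m').comp continuous_fst)).aestronglyMeasurable
        filter_upwards [hKae] with p hp
        simp only [Pi.mul_apply, Function.comp_apply]
        rw [abs_mul]
        exact mul_le_mul (hMabs _ (hargpt p hp lam hlam2)) (hgB m' p.1) (abs_nonneg _) hM0
      simp only [hnn]
      rw [hswap m', hswap m, neg_sub_neg, ← integral_sub hia hib]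
      simp only [hG'def]
      apply integral_congr_ae
      apply ae_of_all
      intro p
      ring
    calc nnF Φ ν l φ m' - nnF Φ ν l φ m = G 1 - G 0 := by rw [hG0, hG1]
      _ = ∫ t in (0:ℝ)..1, G' t := hftc.symm
      _ = ∫ lam in (0:ℝ)..1,
            (∫ x, nnDF Φ ν l φ (convComb lam m m') x ∂(m' : Measure (ℝ × Rd k))
              - ∫ x, nnDF Φ ν l φ (convComb lam m m') x ∂(m : Measure (ℝ × Rd k))) :=
        (intervalIntegral.integral_congr hstep).symm
  · -- HasDerivAt
    intro m x v
    exact nn_hasDerivAt_aux h.l_smooth h.φ_smooth hCl1 hCl2 hCφ1 hCφ2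
      (c := fun p => deriv Φ (p.2 - gInt l φ m p.1)) (hcc m) (hcM m) hM0 hinKb hR0 x v
  · -- continuity of nnDmF
    intro m
    exact nn_cont_aux h.l_smooth h.φ_smooth hCl1 hCl2 hCφ1 hCφ2
      (c := fun p => deriv Φ (p.2 - gInt l φ m p.1)) (hcc m) (hcM m) hM0 hinKb hR0


end
end

section
/- Let Φ, ν, ℓ, φ, φ̂ and F be as in the context, and define D_mF(m,x) := −∫ Φ'( y − ∫_{ℝ^d} φ̂(x',z) m(dx') ) ∇_x φ̂(x,z) ν(dz,dy), where ∇_x φ̂(x,z) = (ℓ'(β)φ(α·z), ℓ(β)φ'(α·z) z) for x = (β,α). Then D_mF is bounded on P_2(ℝ^d) × ℝ^d and there exists a constant C_F > 0 such that |D_mF(m,x) − D_mF(m',x')| ≤ C_F ( |x − x'| + W_2(m, m') ) for all x, x' ∈ ℝ^d and all m, m' ∈ P_2(ℝ^d). -/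
open MeasureTheory Real Filter Topology
open scoped ENNReal NNReal RealInnerProductSpace

noncomputable section

private lemma lip_of_deriv {f : ℝ → ℝ} {C : ℝ} (hf : Differentiable ℝ f)
    (hC : ∀ a, |deriv f a| ≤ C) (a b : ℝ) : |f a - f b| ≤ C * |a - b| := by
  have h := Convex.norm_image_sub_le_of_norm_deriv_le (f := f) (s := (Set.univ : Set ℝ))
    (fun x _ => hf x) (fun x _ => by simpa [Real.norm_eq_abs] using hC x)
    convex_univ (Set.mem_univ b) (Set.mem_univ a)
  simpa [Real.norm_eq_abs] using h

private lemma prod_lip {k : ℕ} {L P : ℝ → ℝ} {C : ℝ}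
    (hL : Differentiable ℝ L) (hP : Differentiable ℝ P)
    (hLb : ∀ a, |L a| ≤ C) (hLd : ∀ a, |deriv L a| ≤ C)
    (hPb : ∀ a, |P a| ≤ C) (hPd : ∀ a, |deriv P a| ≤ C)
    (x x' : ℝ × Rd k) (z : Rd k) :
    |L x.1 * P ⟪x.2, z⟫ - L x'.1 * P ⟪x'.2, z⟫| ≤ C * C * (1 + ‖z‖) * ‖x - x'‖ := by
  have hC : 0 ≤ C := le_trans (abs_nonneg _) (hLb 0)
  have h1 : |x.1 - x'.1| ≤ ‖x - x'‖ := by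
    simpa [Real.norm_eq_abs] using norm_fst_le (x - x')
  have h2 : ‖x.2 - x'.2‖ ≤ ‖x - x'‖ := by simpa using norm_snd_le (x - x')
  have key : L x.1 * P ⟪x.2, z⟫ - L x'.1 * P ⟪x'.2, z⟫
      = (L x.1 - L x'.1) * P ⟪x.2, z⟫ + L x'.1 * (P ⟪x.2, z⟫ - P ⟪x'.2, z⟫) := by ring
  have e1 : |(L x.1 - L x'.1) * P ⟪x.2, z⟫| ≤ (C * |x.1 - x'.1|) * C := by
    rw [abs_mul]
    exact mul_le_mul (lip_of_deriv hL hLd _ _) (hPb _) (abs_nonneg _) (by positivity)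
  have e2 : |L x'.1 * (P ⟪x.2, z⟫ - P ⟪x'.2, z⟫)| ≤ C * (C * (‖x.2 - x'.2‖ * ‖z‖)) := by
    rw [abs_mul]
    refine mul_le_mul (hLb _) ?_ (abs_nonneg _) hC
    refine le_trans (lip_of_deriv hP hPd _ _) ?_
    have hi : |⟪x.2, z⟫ - ⟪x'.2, z⟫| ≤ ‖x.2 - x'.2‖ * ‖z‖ := by
      rw [← inner_sub_left]; exact abs_real_inner_le_norm _ _
    exact mul_le_mul_of_nonneg_left hi hC
  have habs : |L x.1 * P ⟪x.2, z⟫ - L x'.1 * P ⟪x'.2, z⟫|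
      ≤ (C * |x.1 - x'.1|) * C + C * (C * (‖x.2 - x'.2‖ * ‖z‖)) := by
    rw [key]; exact (abs_add_le _ _).trans (add_le_add e1 e2)
  have hz : (0:ℝ) ≤ ‖z‖ := norm_nonneg _
  have hx : (0:ℝ) ≤ ‖x - x'‖ := norm_nonneg _
  nlinarith [mul_le_mul_of_nonneg_left h1 (mul_nonneg hC hC),
    mul_le_mul_of_nonneg_left h2 (mul_nonneg (mul_nonneg hC hC) hz)]

set_option maxHeartbeats 3000000 in
/-- **Boundedness and joint Lipschitz continuity of the intrinsic derivative `D_mF`**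
of the network objective, with respect to the state and the 2-Wasserstein distance. -/
theorem nnDmF_bounded_lipschitz {k : ℕ} (Φ : ℝ → ℝ) (ν : Measure (Rd k × ℝ)) (l φ : ℝ → ℝ)
    (h : NNAssumptions Φ ν l φ) :
    (∃ C : ℝ, ∀ (m : PM (ℝ × Rd k)) (x : ℝ × Rd k), P2 m → ‖nnDmF Φ ν l φ m x‖ ≤ C) ∧
    (∃ C_F : ℝ, 0 < C_F ∧ ∀ (m m' : PM (ℝ × Rd k)) (x x' : ℝ × Rd k), P2 m → P2 m' →
      ‖nnDmF Φ ν l φ m x - nnDmF Φ ν l φ m' x'‖ ≤ C_F * (‖x - x'‖ + W2 m m')) := by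
  classical
  haveI : SecondCountableTopologyEither (ℝ × Rd k) (ℝ × Rd k) :=
    secondCountableTopologyEither_of_left _ _
  haveI hOMS : OpensMeasurableSpace ((ℝ × Rd k) × (ℝ × Rd k)) := Prod.opensMeasurableSpace
  obtain ⟨Cl, hCl⟩ := h.l_bdd
  obtain ⟨Cφ, hCφ⟩ := h.φ_bdd
  set C : ℝ := max Cl Cφ with hCdef
  have hC0 : 0 ≤ C := le_trans (abs_nonneg _) (le_trans (hCl 0).1 (le_max_left _ _))
  have hl : ∀ a, |l a| ≤ C ∧ |deriv l a| ≤ C ∧ |deriv (deriv l) a| ≤ C := fun a =>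
    ⟨(hCl a).1.trans (le_max_left _ _), (hCl a).2.1.trans (le_max_left _ _),
      (hCl a).2.2.trans (le_max_left _ _)⟩
  have hφ : ∀ a, |φ a| ≤ C ∧ |deriv φ a| ≤ C ∧ |deriv (deriv φ) a| ≤ C := fun a =>
    ⟨(hCφ a).1.trans (le_max_right _ _), (hCφ a).2.1.trans (le_max_right _ _),
      (hCφ a).2.2.trans (le_max_right _ _)⟩
  have hldiff : Differentiable ℝ l := h.l_smooth.differentiable (by simp)
  have hl'diff : Differentiable ℝ (deriv l) :=
    ((contDiff_infty_iff_deriv.1 (h.l_smooth.of_le (by simp))).2).differentiable (by simp)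
  have hφdiff : Differentiable ℝ φ := h.φ_smooth.differentiable (by simp)
  have hφ'diff : Differentiable ℝ (deriv φ) :=
    ((contDiff_infty_iff_deriv.1 (h.φ_smooth.of_le (by simp))).2).differentiable (by simp)
  have hlcont : Continuous l := hldiff.continuous
  have hφcont : Continuous φ := hφdiff.continuous
  have hl'cont : Continuous (deriv l) := hl'diff.continuous
  have hφ'cont : Continuous (deriv φ) := hφ'diff.continuous
  obtain ⟨K, hKc, hKν⟩ := h.ν_compact
  obtain ⟨R0, hR0⟩ := isBounded_iff_forall_norm_le.1 hKc.isBounded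
  set R : ℝ := max R0 0 with hRdef
  have hR : ∀ p ∈ K, ‖p‖ ≤ R := fun p hp => (hR0 p hp).trans (le_max_left _ _)
  have hR0' : (0:ℝ) ≤ R := le_max_right _ _
  haveI := h.ν_prob
  have hmem : ∀ᵐ p ∂ν, p ∈ K := by
    rw [MeasureTheory.ae_iff]
    exact hKν
  -- phiHat continuity and bound
  have hphz : ∀ x' : ℝ × Rd k, Continuous fun z : Rd k => phiHat l φ x' z := fun x' => by
    exact continuous_const.mul (hφcont.comp (continuous_const.inner continuous_id))
  have hphx : ∀ z : Rd k, Continuous fun x' : ℝ × Rd k => phiHat l φ x' z := fun z => by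
    exact (hlcont.comp continuous_fst).mul
      (hφcont.comp (continuous_snd.inner continuous_const))
  have hphbdd : ∀ (x' : ℝ × Rd k) (z : Rd k), |phiHat l φ x' z| ≤ C * C := fun x' z => by
    rw [phiHat, abs_mul]
    exact mul_le_mul (hl _).1 (hφ _).1 (abs_nonneg _) hC0
  -- the mean-field integral I(μ, z)
  have hIbdd : ∀ (μ : Measure (ℝ × Rd k)) [IsProbabilityMeasure μ] (z : Rd k),
      |∫ x', phiHat l φ x' z ∂μ| ≤ C * C := by
    intro μ _ z
    have hb := norm_integral_le_of_norm_le_const (μ := μ) (C := C * C)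
      (f := fun x' => phiHat l φ x' z)
      (Filter.Eventually.of_forall fun x' => by simpa [Real.norm_eq_abs] using hphbdd x' z)
    simpa [Real.norm_eq_abs] using hb
  have hIcont : ∀ (μ : Measure (ℝ × Rd k)) [IsProbabilityMeasure μ],
      Continuous fun z : Rd k => ∫ x', phiHat l φ x' z ∂μ := by
    intro μ _
    exact continuous_of_dominated (fun z => (hphx z).aestronglyMeasurable)
      (fun z => Filter.Eventually.of_forall fun x' => by
        simpa [Real.norm_eq_abs] using hphbdd x' z)
      (integrable_const _)
      (Filter.Eventually.of_forall fun x' => hphz x')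
  -- gradPhiHat bounds
  have hgb : ∀ (x : ℝ × Rd k) (z : Rd k), ‖gradPhiHat l φ x z‖ ≤ C * C * (1 + ‖z‖) := by
    intro x z
    rw [gradPhiHat, Prod.norm_def]
    apply max_le
    · rw [Real.norm_eq_abs]
      have hb : |deriv l x.1 * φ ⟪x.2, z⟫| ≤ C * C := by
        rw [abs_mul]; exact mul_le_mul (hl _).2.1 (hφ _).1 (abs_nonneg _) hC0
      refine hb.trans ?_
      nlinarith [norm_nonneg z]
    · rw [norm_smul]
      have hb : ‖l x.1 * deriv φ ⟪x.2, z⟫‖ ≤ C * C := by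
        rw [Real.norm_eq_abs, abs_mul]
        exact mul_le_mul (hl _).1 (hφ _).2.1 (abs_nonneg _) hC0
      nlinarith [norm_nonneg z, norm_nonneg (l x.1 * deriv φ ⟪x.2, z⟫)]
  have hglip : ∀ (x x' : ℝ × Rd k) (z : Rd k),
      ‖gradPhiHat l φ x z - gradPhiHat l φ x' z‖
        ≤ C * C * (1 + ‖z‖) * (1 + ‖z‖) * ‖x - x'‖ := by
    intro x x' z
    have e1 := prod_lip (L := deriv l) (P := φ) hl'diff hφdiff (fun a => (hl a).2.1)
      (fun a => (hl a).2.2) (fun a => (hφ a).1) (fun a => (hφ a).2.1) x x' z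
    have e2 := prod_lip (L := l) (P := deriv φ) hldiff hφ'diff (fun a => (hl a).1)
      (fun a => (hl a).2.1) (fun a => (hφ a).2.1) (fun a => (hφ a).2.2) x x' z
    have hA : (0:ℝ) ≤ C * C * (1 + ‖z‖) * ‖x - x'‖ := by positivity
    rw [gradPhiHat, gradPhiHat, Prod.mk_sub_mk, Prod.norm_def]
    apply max_le
    · simp only [Real.norm_eq_abs]
      nlinarith [norm_nonneg z, e1]
    · rw [← sub_smul, norm_smul, Real.norm_eq_abs]
      calc |l x.1 * deriv φ ⟪x.2, z⟫ - l x'.1 * deriv φ ⟪x'.2, z⟫| * ‖z‖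
          ≤ (C * C * (1 + ‖z‖) * ‖x - x'‖) * ‖z‖ :=
            mul_le_mul_of_nonneg_right e2 (norm_nonneg z)
        _ ≤ _ := by nlinarith [norm_nonneg z]
  have hgz : ∀ x : ℝ × Rd k, Continuous fun z : Rd k => gradPhiHat l φ x z := by
    intro x
    exact (continuous_const.mul (hφcont.comp (continuous_const.inner continuous_id))).prodMk
      ((continuous_const.mul (hφ'cont.comp (continuous_const.inner continuous_id))).smul
        continuous_id)
  -- bounds for deriv Φ on the compact interval J
  set B : ℝ := R + C * C with hBdef
  have hB0 : (0:ℝ) ≤ B := by positivity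
  set J : Set ℝ := Set.Icc (-B) B with hJdef
  have hΦ'diff : Differentiable ℝ (deriv Φ) :=
    ((contDiff_infty_iff_deriv.1 (h.Φ_smooth.of_le (by simp))).2).differentiable (by simp)
  have hΦ'cont : Continuous (deriv Φ) := hΦ'diff.continuous
  have hΦ''cont : Continuous (deriv (deriv Φ)) :=
    (((contDiff_infty_iff_deriv.1 ((contDiff_infty_iff_deriv.1 (h.Φ_smooth.of_le (by simp))).2)).2)).continuous
  obtain ⟨M0, hM0⟩ := isCompact_Icc.exists_bound_of_continuousOn
    (s := J) (hΦ'cont.continuousOn)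
  obtain ⟨L0, hL0⟩ := isCompact_Icc.exists_bound_of_continuousOn
    (s := J) (hΦ''cont.continuousOn)
  set M : ℝ := max M0 0 with hMdef
  set LΦ : ℝ := max L0 0 with hLdef
  have hM : ∀ a ∈ J, |deriv Φ a| ≤ M := fun a ha => by
    rw [← Real.norm_eq_abs]; exact (hM0 a ha).trans (le_max_left _ _)
  have hMn : (0:ℝ) ≤ M := le_max_right _ _
  have hLΦn : (0:ℝ) ≤ LΦ := le_max_right _ _
  have hΦlip : ∀ a ∈ J, ∀ b ∈ J, |deriv Φ a - deriv Φ b| ≤ LΦ * |a - b| := by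
    intro a ha b hb
    have hlp := Convex.norm_image_sub_le_of_norm_deriv_le (f := deriv Φ) (s := J) (C := LΦ)
      (fun y _ => hΦ'diff y)
      (fun y hy => (hL0 y hy).trans (le_max_left _ _)) (convex_Icc _ _) hb ha
    simpa [Real.norm_eq_abs] using hlp
  -- membership of the argument in J
  have hargJ : ∀ (μ : Measure (ℝ × Rd k)) [IsProbabilityMeasure μ], ∀ p ∈ K,
      p.2 - ∫ x', phiHat l φ x' p.1 ∂μ ∈ J := by
    intro μ _ p hp
    have hy : |p.2| ≤ R := le_trans (by simpa using norm_snd_le p) (hR p hp)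
    have hIb := hIbdd μ p.1
    rw [hJdef, Set.mem_Icc]
    constructor <;> [nlinarith [abs_le.1 hy, abs_le.1 hIb]; nlinarith [abs_le.1 hy, abs_le.1 hIb]]
  -- integrand properties
  have key_meas : ∀ (μ : Measure (ℝ × Rd k)) [IsProbabilityMeasure μ] (x : ℝ × Rd k),
      Continuous fun p : Rd k × ℝ =>
        deriv Φ (p.2 - ∫ x', phiHat l φ x' p.1 ∂μ) • gradPhiHat l φ x p.1 := by
    intro μ _ x
    exact (hΦ'cont.comp (continuous_snd.sub ((hIcont μ).comp continuous_fst))).smul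
      ((hgz x).comp continuous_fst)
  have key_bdd : ∀ (μ : Measure (ℝ × Rd k)) [IsProbabilityMeasure μ] (x : ℝ × Rd k),
      ∀ᵐ p ∂ν, ‖deriv Φ (p.2 - ∫ x', phiHat l φ x' p.1 ∂μ) • gradPhiHat l φ x p.1‖
        ≤ M * (C * C * (1 + R)) := by
    intro μ _ x
    filter_upwards [hmem] with p hp
    have hz : ‖p.1‖ ≤ R := le_trans (norm_fst_le p) (hR p hp)
    rw [norm_smul, Real.norm_eq_abs]
    have h1 : |deriv Φ (p.2 - ∫ x', phiHat l φ x' p.1 ∂μ)| ≤ M := hM _ (hargJ μ p hp)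
    have h2 : ‖gradPhiHat l φ x p.1‖ ≤ C * C * (1 + R) :=
      (hgb x p.1).trans (by nlinarith)
    exact mul_le_mul h1 h2 (norm_nonneg _) hMn
  have key_int : ∀ (μ : Measure (ℝ × Rd k)) [IsProbabilityMeasure μ] (x : ℝ × Rd k),
      Integrable (fun p : Rd k × ℝ =>
        deriv Φ (p.2 - ∫ x', phiHat l φ x' p.1 ∂μ) • gradPhiHat l φ x p.1) ν := by
    intro μ _ x
    exact Integrable.mono' (integrable_const _) (key_meas μ x).aestronglyMeasurable (key_bdd μ x)
  constructor
  · refine ⟨M * (C * C * (1 + R)), fun m x _ => ?_⟩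
    rw [nnDmF, norm_neg]
    have hb := norm_integral_le_of_norm_le (μ := ν)
      (integrable_const (M * (C * C * (1 + R)))) (key_bdd (m : Measure (ℝ × Rd k)) x)
    simpa using hb
  · obtain ⟨Lg, hLgdef⟩ : ∃ Lg : ℝ, Lg = C * C * (1 + R) * (1 + R) := ⟨_, rfl⟩
    obtain ⟨G, hGdef⟩ : ∃ G : ℝ, G = C * C * (1 + R) := ⟨_, rfl⟩
    have hLgn : (0:ℝ) ≤ Lg := by rw [hLgdef]; positivity
    have hGn : (0:ℝ) ≤ G := by rw [hGdef]; positivity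
    obtain ⟨CF, hCFdef⟩ : ∃ CF : ℝ, CF = M * Lg + LΦ * G * G + 1 := ⟨_, rfl⟩
    have hCFpos : (0:ℝ) < CF := by
      have h1 : (0:ℝ) ≤ M * Lg := mul_nonneg hMn hLgn
      have h2 : (0:ℝ) ≤ LΦ * G * G := mul_nonneg (mul_nonneg hLΦn hGn) hGn
      rw [hCFdef]; linarith
    refine ⟨CF, hCFpos, fun m m' x x' hm hm' => ?_⟩
    -- uniform-in-z lipschitz bounds on K
    have hglipR : ∀ (a a' : ℝ × Rd k) (z : Rd k), ‖z‖ ≤ R →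
        ‖gradPhiHat l φ a z - gradPhiHat l φ a' z‖ ≤ Lg * ‖a - a'‖ := by
      intro a a' z hz
      refine (hglip a a' z).trans ?_
      rw [hLgdef]
      have h1 : (1 + ‖z‖) * (1 + ‖z‖) ≤ (1 + R) * (1 + R) := by nlinarith [norm_nonneg z]
      calc C * C * (1 + ‖z‖) * (1 + ‖z‖) * ‖a - a'‖
          = (C * C) * ((1 + ‖z‖) * (1 + ‖z‖)) * ‖a - a'‖ := by ring
        _ ≤ (C * C) * ((1 + R) * (1 + R)) * ‖a - a'‖ :=
            mul_le_mul_of_nonneg_right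
              (mul_le_mul_of_nonneg_left h1 (mul_nonneg hC0 hC0)) (norm_nonneg _)
        _ = C * C * (1 + R) * (1 + R) * ‖a - a'‖ := by ring
    have hgbR : ∀ (a : ℝ × Rd k) (z : Rd k), ‖z‖ ≤ R → ‖gradPhiHat l φ a z‖ ≤ G := by
      intro a z hz
      refine (hgb a z).trans ?_
      rw [hGdef]
      have h1 : 1 + ‖z‖ ≤ 1 + R := by linarith
      exact mul_le_mul_of_nonneg_left h1 (mul_nonneg hC0 hC0)
    -- the key coupling estimate
    have hW : ∀ r ∈ {r : ℝ | ∃ cpl : Measure ((ℝ × Rd k) × (ℝ × Rd k)),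
        cpl.map Prod.fst = (m : Measure (ℝ × Rd k)) ∧
        cpl.map Prod.snd = (m' : Measure (ℝ × Rd k)) ∧
        r = ((∫⁻ p, ENNReal.ofReal (‖p.1 - p.2‖ ^ 2) ∂cpl).toReal) ^ (1 / 2 : ℝ)},
        ‖nnDmF Φ ν l φ m x - nnDmF Φ ν l φ m' x'‖ ≤ CF * (‖x - x'‖ + r) := by
      intro r hr
      obtain ⟨cpl, hc1, hc2, hrdef⟩ := hr
      haveI hcprob : IsProbabilityMeasure cpl := by
        constructor
        have hu : cpl.map Prod.fst Set.univ = 1 := by rw [hc1]; exact measure_univ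
        rwa [Measure.map_apply measurable_fst MeasurableSet.univ, Set.preimage_univ] at hu
      set Lc : ℝ≥0∞ := ∫⁻ p, ENNReal.ofReal (‖p.1 - p.2‖ ^ 2) ∂cpl with hLcdef
      have hmeasn : Measurable fun q : ℝ × Rd k => ENNReal.ofReal (‖q‖ ^ 2) :=
        (ENNReal.measurable_ofReal).comp ((continuous_norm.pow 2).measurable)
      have hfin1 : (∫⁻ p : (ℝ × Rd k) × (ℝ × Rd k), ENNReal.ofReal (‖p.1‖ ^ 2) ∂cpl) ≠ ⊤ := by
        have he : (∫⁻ p : (ℝ × Rd k) × (ℝ × Rd k), ENNReal.ofReal (‖p.1‖ ^ 2) ∂cpl)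
            = ∫⁻ q, ENNReal.ofReal (‖q‖ ^ 2) ∂(cpl.map Prod.fst) := by
          rw [lintegral_map hmeasn measurable_fst]
        rw [he, hc1]
        have hfi := (MeasureTheory.Integrable.hasFiniteIntegral
          (show Integrable (fun x : ℝ × Rd k => ‖x‖ ^ 2) (m : Measure (ℝ × Rd k)) from hm))
        rw [MeasureTheory.HasFiniteIntegral] at hfi
        refine ne_of_lt (lt_of_le_of_lt (le_of_eq ?_) hfi)
        refine lintegral_congr fun q => ?_
        rw [← Real.enorm_eq_ofReal (by positivity)]
      have hfin2 : (∫⁻ p : (ℝ × Rd k) × (ℝ × Rd k), ENNReal.ofReal (‖p.2‖ ^ 2) ∂cpl) ≠ ⊤ := by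
        have he : (∫⁻ p : (ℝ × Rd k) × (ℝ × Rd k), ENNReal.ofReal (‖p.2‖ ^ 2) ∂cpl)
            = ∫⁻ q, ENNReal.ofReal (‖q‖ ^ 2) ∂(cpl.map Prod.snd) := by
          rw [lintegral_map hmeasn measurable_snd]
        rw [he, hc2]
        have hfi := (MeasureTheory.Integrable.hasFiniteIntegral
          (show Integrable (fun x : ℝ × Rd k => ‖x‖ ^ 2) (m' : Measure (ℝ × Rd k)) from hm'))
        rw [MeasureTheory.HasFiniteIntegral] at hfi
        refine ne_of_lt (lt_of_le_of_lt (le_of_eq ?_) hfi)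
        refine lintegral_congr fun q => ?_
        rw [← Real.enorm_eq_ofReal (by positivity)]
      have hLcfin : Lc ≠ ⊤ := by
        have hb : ∀ p : (ℝ × Rd k) × (ℝ × Rd k), ENNReal.ofReal (‖p.1 - p.2‖ ^ 2)
            ≤ 2 * ENNReal.ofReal (‖p.1‖ ^ 2) + 2 * ENNReal.ofReal (‖p.2‖ ^ 2) := by
          intro p
          have hr2 : ‖p.1 - p.2‖ ^ 2 ≤ 2 * ‖p.1‖ ^ 2 + 2 * ‖p.2‖ ^ 2 := by
            nlinarith [norm_sub_le p.1 p.2, norm_nonneg p.1, norm_nonneg p.2,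
              sq_nonneg (‖p.1‖ - ‖p.2‖), sq_nonneg (‖p.1‖ + ‖p.2‖),
              abs_nonneg (‖p.1 - p.2‖), sq_abs (‖p.1 - p.2‖),
              sq_le_sq' (by nlinarith [norm_nonneg (p.1 - p.2), norm_sub_le p.1 p.2] :
                -(‖p.1‖ + ‖p.2‖) ≤ ‖p.1 - p.2‖) (norm_sub_le p.1 p.2)]
          calc ENNReal.ofReal (‖p.1 - p.2‖ ^ 2)
              ≤ ENNReal.ofReal (2 * ‖p.1‖ ^ 2 + 2 * ‖p.2‖ ^ 2) := ENNReal.ofReal_le_ofReal hr2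
            _ = 2 * ENNReal.ofReal (‖p.1‖ ^ 2) + 2 * ENNReal.ofReal (‖p.2‖ ^ 2) := by
                rw [ENNReal.ofReal_add (by positivity) (by positivity),
                  ENNReal.ofReal_mul (by norm_num), ENNReal.ofReal_mul (by norm_num)]
                norm_num
        have hmono := lintegral_mono (μ := cpl) hb
        refine ne_top_of_le_ne_top ?_ hmono
        have hm1 : Measurable fun p : (ℝ × Rd k) × (ℝ × Rd k) =>
            ENNReal.ofReal (‖p.1‖ ^ 2) := (measurable_fst.norm.pow_const 2).ennreal_ofReal
        have hm2 : Measurable fun p : (ℝ × Rd k) × (ℝ × Rd k) =>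
            ENNReal.ofReal (‖p.2‖ ^ 2) := (measurable_snd.norm.pow_const 2).ennreal_ofReal
        rw [lintegral_add_left (hm1.const_mul 2), lintegral_const_mul 2 hm1,
          lintegral_const_mul 2 hm2]
        exact ENNReal.add_ne_top.2
          ⟨ENNReal.mul_ne_top (by norm_num) hfin1, ENNReal.mul_ne_top (by norm_num) hfin2⟩
      have hr0 : (0:ℝ) ≤ r := by
        rw [hrdef]; positivity
      -- Lipschitz estimate on the mean-field term from the coupling
      have hIdiff : ∀ z : Rd k, ‖z‖ ≤ R →
          |(∫ x'', phiHat l φ x'' z ∂(m : Measure (ℝ × Rd k)))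
            - ∫ x'', phiHat l φ x'' z ∂(m' : Measure (ℝ × Rd k))| ≤ G * r := by
        intro z hz
        have e1 : (∫ x'', phiHat l φ x'' z ∂(m : Measure (ℝ × Rd k)))
            = ∫ p : (ℝ × Rd k) × (ℝ × Rd k), phiHat l φ p.1 z ∂cpl := by
          rw [← hc1, integral_map measurable_fst.aemeasurable (hphx z).aestronglyMeasurable]
        have e2 : (∫ x'', phiHat l φ x'' z ∂(m' : Measure (ℝ × Rd k)))
            = ∫ p : (ℝ × Rd k) × (ℝ × Rd k), phiHat l φ p.2 z ∂cpl := by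
          rw [← hc2, integral_map measurable_snd.aemeasurable (hphx z).aestronglyMeasurable]
        have hint1 : Integrable (fun p : (ℝ × Rd k) × (ℝ × Rd k) => phiHat l φ p.1 z) cpl :=
          Integrable.mono' (integrable_const (C * C))
            ((hphx z).comp continuous_fst).aestronglyMeasurable
            (Filter.Eventually.of_forall fun p => by
              simpa [Real.norm_eq_abs] using hphbdd p.1 z)
        have hint2 : Integrable (fun p : (ℝ × Rd k) × (ℝ × Rd k) => phiHat l φ p.2 z) cpl :=
          Integrable.mono' (integrable_const (C * C))
            ((hphx z).comp continuous_snd).aestronglyMeasurable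
            (Filter.Eventually.of_forall fun p => by
              simpa [Real.norm_eq_abs] using hphbdd p.2 z)
        rw [e1, e2, ← integral_sub hint1 hint2]
        have hub : ∀ p : (ℝ × Rd k) × (ℝ × Rd k),
            |phiHat l φ p.1 z - phiHat l φ p.2 z| ≤ G * ‖p.1 - p.2‖ := by
          intro p
          have hpl := prod_lip (L := l) (P := φ) hldiff hφdiff (fun a => (hl a).1)
            (fun a => (hl a).2.1) (fun a => (hφ a).1) (fun a => (hφ a).2.1) p.1 p.2 z
          have hpl' : |phiHat l φ p.1 z - phiHat l φ p.2 z|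
              ≤ C * C * (1 + ‖z‖) * ‖p.1 - p.2‖ := by simpa [phiHat] using hpl
          refine hpl'.trans ?_
          rw [hGdef]
          exact mul_le_mul_of_nonneg_right
            (mul_le_mul_of_nonneg_left (by linarith) (mul_nonneg hC0 hC0)) (norm_nonneg _)
        have hgmeas : AEStronglyMeasurable
            (fun p : (ℝ × Rd k) × (ℝ × Rd k) => ‖p.1 - p.2‖) cpl :=
          (continuous_fst.sub continuous_snd).norm.aestronglyMeasurable
        -- L¹-L² comparison
        have hL12 : (∫⁻ p, ENNReal.ofReal ‖p.1 - p.2‖ ∂cpl) ≤ Lc ^ (1 / 2 : ℝ) := by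
          have h1 : (∫⁻ p, ENNReal.ofReal ‖p.1 - p.2‖ ∂cpl)
              = eLpNorm (fun p : (ℝ × Rd k) × (ℝ × Rd k) => ‖p.1 - p.2‖) 1 cpl := by
            rw [MeasureTheory.eLpNorm_one_eq_lintegral_enorm]
            refine lintegral_congr fun p => ?_
            rw [Real.enorm_eq_ofReal (norm_nonneg _)]
          have h2 : eLpNorm (fun p : (ℝ × Rd k) × (ℝ × Rd k) => ‖p.1 - p.2‖) 2 cpl
              = Lc ^ (1 / 2 : ℝ) := by
            rw [MeasureTheory.eLpNorm_eq_lintegral_rpow_enorm_toReal (by norm_num) (by norm_num),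
              ENNReal.toReal_ofNat]
            congr 1
            refine lintegral_congr fun p => ?_
            rw [Real.enorm_eq_ofReal (norm_nonneg _),
              ENNReal.ofReal_rpow_of_nonneg (norm_nonneg _) (by norm_num)]
            congr 1
            rw [show ((2:ℝ)) = ((2:ℕ):ℝ) by norm_num, Real.rpow_natCast]
          rw [h1, ← h2]
          exact MeasureTheory.eLpNorm_le_eLpNorm_of_exponent_le (by norm_num) hgmeas
        have hnb := MeasureTheory.norm_integral_le_lintegral_norm (μ := cpl)
          (fun p : (ℝ × Rd k) × (ℝ × Rd k) => phiHat l φ p.1 z - phiHat l φ p.2 z)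
        rw [Real.norm_eq_abs] at hnb
        refine hnb.trans ?_
        have hmono2 : (∫⁻ p : (ℝ × Rd k) × (ℝ × Rd k),
              ENNReal.ofReal ‖phiHat l φ p.1 z - phiHat l φ p.2 z‖ ∂cpl)
            ≤ ENNReal.ofReal G * Lc ^ (1 / 2 : ℝ) := by
          have hstep : (∫⁻ p : (ℝ × Rd k) × (ℝ × Rd k),
                ENNReal.ofReal ‖phiHat l φ p.1 z - phiHat l φ p.2 z‖ ∂cpl)
              ≤ ∫⁻ p : (ℝ × Rd k) × (ℝ × Rd k),
                ENNReal.ofReal G * ENNReal.ofReal ‖p.1 - p.2‖ ∂cpl := by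
            refine lintegral_mono fun p => ?_
            rw [← ENNReal.ofReal_mul hGn]
            refine ENNReal.ofReal_le_ofReal ?_
            rw [Real.norm_eq_abs]
            exact hub p
          refine hstep.trans ?_
          rw [lintegral_const_mul (ENNReal.ofReal G)
            (f := fun p : (ℝ × Rd k) × (ℝ × Rd k) => ENNReal.ofReal ‖p.1 - p.2‖)
            ((measurable_fst.sub measurable_snd).norm.ennreal_ofReal)]
          exact mul_le_mul_right hL12 _
        have htr := ENNReal.toReal_mono
          (ENNReal.mul_ne_top ENNReal.ofReal_ne_top
            (ENNReal.rpow_ne_top_of_nonneg (by norm_num) hLcfin)) hmono2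
        refine htr.trans ?_
        rw [ENNReal.toReal_mul, ENNReal.toReal_ofReal hGn, ← ENNReal.toReal_rpow, hrdef]
      -- main pointwise estimate
      haveI : IsProbabilityMeasure (m : Measure (ℝ × Rd k)) := m.prop
      haveI : IsProbabilityMeasure (m' : Measure (ℝ × Rd k)) := m'.prop
      have hint_m := key_int (m : Measure (ℝ × Rd k)) x
      have hint_m' := key_int (m' : Measure (ℝ × Rd k)) x'
      have hdiff_eq : nnDmF Φ ν l φ m x - nnDmF Φ ν l φ m' x'
          = ∫ p, ((deriv Φ (p.2 - ∫ x'', phiHat l φ x'' p.1 ∂(m' : Measure (ℝ × Rd k)))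
              • gradPhiHat l φ x' p.1)
            - deriv Φ (p.2 - ∫ x'', phiHat l φ x'' p.1 ∂(m : Measure (ℝ × Rd k)))
              • gradPhiHat l φ x p.1) ∂ν := by
        rw [nnDmF, nnDmF, integral_sub hint_m' hint_m]
        abel
      rw [hdiff_eq]
      have hpw : ∀ᵐ p ∂ν,
          ‖(deriv Φ (p.2 - ∫ x'', phiHat l φ x'' p.1 ∂(m' : Measure (ℝ × Rd k)))
              • gradPhiHat l φ x' p.1)
            - deriv Φ (p.2 - ∫ x'', phiHat l φ x'' p.1 ∂(m : Measure (ℝ × Rd k)))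
              • gradPhiHat l φ x p.1‖
          ≤ M * Lg * ‖x - x'‖ + LΦ * G * G * r := by
        filter_upwards [hmem] with p hp
        have hz : ‖p.1‖ ≤ R := le_trans (norm_fst_le p) (hR p hp)
        set a : ℝ := p.2 - ∫ x'', phiHat l φ x'' p.1 ∂(m : Measure (ℝ × Rd k)) with hadef
        set a' : ℝ := p.2 - ∫ x'', phiHat l φ x'' p.1 ∂(m' : Measure (ℝ × Rd k)) with ha'def
        have haJ : a ∈ J := hargJ (m : Measure (ℝ × Rd k)) p hp
        have ha'J : a' ∈ J := hargJ (m' : Measure (ℝ × Rd k)) p hp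
        have hdec : deriv Φ a' • gradPhiHat l φ x' p.1 - deriv Φ a • gradPhiHat l φ x p.1
            = deriv Φ a' • (gradPhiHat l φ x' p.1 - gradPhiHat l φ x p.1)
              + (deriv Φ a' - deriv Φ a) • gradPhiHat l φ x p.1 := by
          rw [smul_sub, sub_smul]; abel
        rw [hdec]
        refine (norm_add_le _ _).trans ?_
        have t1 : ‖deriv Φ a' • (gradPhiHat l φ x' p.1 - gradPhiHat l φ x p.1)‖
            ≤ M * (Lg * ‖x - x'‖) := by
          rw [norm_smul, Real.norm_eq_abs]
          refine mul_le_mul (hM _ ha'J) ?_ (norm_nonneg _) hMn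
          have := hglipR x' x p.1 hz
          rwa [norm_sub_rev x' x] at this
        have t2 : ‖(deriv Φ a' - deriv Φ a) • gradPhiHat l φ x p.1‖
            ≤ (LΦ * (G * r)) * G := by
          rw [norm_smul, Real.norm_eq_abs]
          refine mul_le_mul ?_ (hgbR x p.1 hz) (norm_nonneg _) (by positivity)
          refine (hΦlip a' ha'J a haJ).trans ?_
          refine mul_le_mul_of_nonneg_left ?_ hLΦn
          have : |a' - a| = |(∫ x'', phiHat l φ x'' p.1 ∂(m : Measure (ℝ × Rd k)))
              - ∫ x'', phiHat l φ x'' p.1 ∂(m' : Measure (ℝ × Rd k))| := by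
            rw [hadef, ha'def]; ring_nf
          rw [this]
          exact hIdiff p.1 hz
        nlinarith [norm_nonneg (deriv Φ a' • (gradPhiHat l φ x' p.1 - gradPhiHat l φ x p.1)),
          norm_nonneg ((deriv Φ a' - deriv Φ a) • gradPhiHat l φ x p.1)]
      have hfinal := norm_integral_le_of_norm_le (μ := ν)
        (integrable_const (M * Lg * ‖x - x'‖ + LΦ * G * G * r)) hpw
      simp only [MeasureTheory.integral_const, measure_univ, probReal_univ, ENNReal.toReal_one,
        smul_eq_mul, one_mul] at hfinal
      refine hfinal.trans ?_
      have hx0 : (0:ℝ) ≤ ‖x - x'‖ := norm_nonneg _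
      have h1 : (0:ℝ) ≤ M * Lg := mul_nonneg hMn hLgn
      have h2 : (0:ℝ) ≤ LΦ * G * G := mul_nonneg (mul_nonneg hLΦn hGn) hGn
      rw [hCFdef]
      nlinarith
    -- conclusion via infimum
    have hne : Set.Nonempty {r : ℝ | ∃ cpl : Measure ((ℝ × Rd k) × (ℝ × Rd k)),
        cpl.map Prod.fst = (m : Measure (ℝ × Rd k)) ∧
        cpl.map Prod.snd = (m' : Measure (ℝ × Rd k)) ∧
        r = ((∫⁻ p, ENNReal.ofReal (‖p.1 - p.2‖ ^ 2) ∂cpl).toReal) ^ (1 / 2 : ℝ)} := by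
      haveI : IsProbabilityMeasure (m : Measure (ℝ × Rd k)) := m.prop
      haveI : IsProbabilityMeasure (m' : Measure (ℝ × Rd k)) := m'.prop
      refine ⟨_, (m : Measure (ℝ × Rd k)).prod (m' : Measure (ℝ × Rd k)), ?_, ?_, rfl⟩
      · rw [Measure.map_fst_prod]; simp
      · rw [Measure.map_snd_prod]; simp
    have hle : (‖nnDmF Φ ν l φ m x - nnDmF Φ ν l φ m' x'‖ - CF * ‖x - x'‖) / CF
        ≤ sInf {r : ℝ | ∃ cpl : Measure ((ℝ × Rd k) × (ℝ × Rd k)),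
          cpl.map Prod.fst = (m : Measure (ℝ × Rd k)) ∧
          cpl.map Prod.snd = (m' : Measure (ℝ × Rd k)) ∧
          r = ((∫⁻ p, ENNReal.ofReal (‖p.1 - p.2‖ ^ 2) ∂cpl).toReal) ^ (1 / 2 : ℝ)} := by
      refine le_csInf hne fun r hrr => ?_
      rw [div_le_iff₀ hCFpos]
      have := hW r hrr
      nlinarith
    rw [div_le_iff₀ hCFpos] at hle
    rw [show W2 m m' = sInf {r : ℝ | ∃ cpl : Measure ((ℝ × Rd k) × (ℝ × Rd k)),
          cpl.map Prod.fst = (m : Measure (ℝ × Rd k)) ∧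
          cpl.map Prod.snd = (m' : Measure (ℝ × Rd k)) ∧
          r = ((∫⁻ p, ENNReal.ofReal (‖p.1 - p.2‖ ^ 2) ∂cpl).toReal) ^ (1 / 2 : ℝ)} from rfl]
    nlinarith [hle]

end
end
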